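/- Correctness of a retargeted abstract interpreter: under the hypotheses of the meta-level analysis lemma together with a partial evaluator PE satisfying ⟦PE(e, i₁)⟧_M i₂ = ⟦e⟧_M ⟨i₁, i₂⟩, defining aint_T := PE(aint, enc_SM(int_T^S)), we have enc_SM(enc_TS(⟦e⟧_T i)) ∈ γ_S (⟦aint_T⟧_M (enc_SM(⟨enc_TS(e), enc_TS(i)⟩))) for all target programs e and target inputs i. -/
import Mathlib


theorem retargeted_abstract_interpreter_correct
    {E_M V_M E_S V_S E_T V_T A : Type*}
    (semM : E_M → V_M → A) (semS : E_S → V_S → V_S) (semT : E_T → V_T → V_T)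
    (pairS : V_S → V_S → V_S) (pairM : V_M → V_M → V_M)
    (encTS : E_T ⊕ V_T → V_S) (encSM : E_S ⊕ V_S → V_M)
    (γS : A → Set V_M)
    (intTS : E_S)
    (hint : ∀ (e : E_T) (i : V_T),
      semS intTS (pairS (encTS (Sum.inl e)) (encTS (Sum.inr i))) =
        encTS (Sum.inr (semT e i)))
    (aint : E_M)
    (haint : ∀ (e' : E_S) (i' : V_S),
      encSM (Sum.inr (semS e' i')) ∈
        γS (semM aint (pairM (encSM (Sum.inl e')) (encSM (Sum.inr i')))))
    (PE : E_M → V_M → E_M)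
    (hPE : ∀ (e : E_M) (i₁ i₂ : V_M), semM (PE e i₁) i₂ = semM e (pairM i₁ i₂)) :
    ∀ (e : E_T) (i : V_T),
      encSM (Sum.inr (encTS (Sum.inr (semT e i)))) ∈
        γS (semM (PE aint (encSM (Sum.inl intTS)))
          (encSM (Sum.inr (pairS (encTS (Sum.inl e)) (encTS (Sum.inr i)))))) := by
  intro e i
  rw [hPE]
  rw [← hint e i]
  exact haint intTS _
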